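/- There exist no perfect LDOI unitary matrices: for d ≥ 2, no LDOI matrix X parametrized by (A,B,C) has the property that X, its realignment X^R, and its partial transpose X^Γ are all unitary. -/
import Mathlib


open Matrix

/-- The LDOI matrix `X^{(3)}_{(A,B,C)} = Σ_{i,j} A_{ij}|ij⟩⟨ij| + Σ_{i≠j} B_{ij}|ii⟩⟨jj|
  + Σ_{i≠j} C_{ij}|ij⟩⟨ji|`. -/
def X3 {d : ℕ} {R : Type*} [CommRing R] (A B C : Matrix (Fin d) (Fin d) R) :
    Matrix (Fin d × Fin d) (Fin d × Fin d) R :=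
  Matrix.of fun p q =>
    (if p.1 = q.1 ∧ p.2 = q.2 then A p.1 p.2 else 0) +
    (if p.1 = p.2 ∧ q.1 = q.2 ∧ p.1 ≠ q.1 then B p.1 q.1 else 0) +
    (if p.1 = q.2 ∧ p.2 = q.1 ∧ p.1 ≠ p.2 then C p.1 p.2 else 0)

/-- The realignment `(X^R)_{ij,kl} = X_{ik,jl}`. -/
def realign {d : ℕ} {R : Type*} [CommRing R]
    (X : Matrix (Fin d × Fin d) (Fin d × Fin d) R) :
    Matrix (Fin d × Fin d) (Fin d × Fin d) R :=
  Matrix.of fun p q => X (p.1, q.1) (p.2, q.2)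

/-- The partial transpose `(X^Γ)_{ij,kl} = X_{il,kj}`. -/
def ptrans {d : ℕ} {R : Type*} [CommRing R]
    (X : Matrix (Fin d × Fin d) (Fin d × Fin d) R) :
    Matrix (Fin d × Fin d) (Fin d × Fin d) R :=
  Matrix.of fun p q => X (p.1, q.2) (q.1, p.2)

/-- The triple (A,B,C) has equal diagonals. -/
def EqDiag {d : ℕ} {R : Type*} [CommRing R] (A B C : Matrix (Fin d) (Fin d) R) : Prop :=
  ∀ i, A i i = B i i ∧ B i i = C i i

section helpers
variable {d : ℕ} (A B C : Matrix (Fin d) (Fin d) ℂ) {i j : Fin d}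

lemma X3_row_zero (hij : i ≠ j) (r : Fin d × Fin d)
    (h1 : r ≠ (i, j)) (h2 : r ≠ (j, i)) : X3 A B C (i, j) r = 0 := by
  obtain ⟨r1, r2⟩ := r
  simp only [ne_eq, Prod.mk.injEq, not_and] at h1 h2
  simp only [X3, Matrix.of_apply]
  split_ifs <;> simp_all

lemma realign_row_zero (hij : i ≠ j) (r : Fin d × Fin d)
    (h1 : r ≠ (i, j)) (h2 : r ≠ (j, i)) : realign (X3 A B C) (i, j) r = 0 := by
  obtain ⟨r1, r2⟩ := r
  simp only [ne_eq, Prod.mk.injEq, not_and] at h1 h2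
  simp only [realign, X3, Matrix.of_apply]
  split_ifs <;> simp_all

lemma ptrans_row_zero (hij : i ≠ j) (r : Fin d × Fin d)
    (h1 : r ≠ (i, j)) (h2 : r ≠ (j, i)) : ptrans (X3 A B C) (i, j) r = 0 := by
  obtain ⟨r1, r2⟩ := r
  simp only [ne_eq, Prod.mk.injEq, not_and] at h1 h2
  simp only [ptrans, X3, Matrix.of_apply]
  split_ifs <;> simp_all

lemma X3_v1 (hij : i ≠ j) : X3 A B C (i, j) (i, j) = A i j := by
  simp [X3, hij]

lemma X3_v2 (hij : i ≠ j) : X3 A B C (i, j) (j, i) = C i j := by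
  simp [X3, hij, hij.symm]

lemma realign_v1 (hij : i ≠ j) : realign (X3 A B C) (i, j) (i, j) = B i j := by
  simp [realign, X3, hij]

lemma realign_v2 (hij : i ≠ j) : realign (X3 A B C) (i, j) (j, i) = C i j := by
  simp [realign, X3, hij, hij.symm]

lemma ptrans_v1 (hij : i ≠ j) : ptrans (X3 A B C) (i, j) (i, j) = A i j := by
  simp [ptrans, X3, hij]

lemma ptrans_v2 (hij : i ≠ j) : ptrans (X3 A B C) (i, j) (j, i) = B i j := by
  simp [ptrans, X3, hij, hij.symm]

end helpers

lemma dot_two {d : ℕ} (Y : Matrix (Fin d × Fin d) (Fin d × Fin d) ℂ)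
    (hY : Y ∈ Matrix.unitaryGroup (Fin d × Fin d) ℂ)
    (p q x y : Fin d × Fin d) (hxy : x ≠ y)
    (hp : ∀ r, r ≠ x → r ≠ y → Y p r = 0)
    (hq : ∀ r, r ≠ x → r ≠ y → Y q r = 0) :
    Y p x * (starRingEnd ℂ) (Y q x) + Y p y * (starRingEnd ℂ) (Y q y)
      = if p = q then 1 else 0 := by
  have h1 : Y * Yᴴ = 1 := Matrix.mem_unitaryGroup_iff.mp hY
  have h2 : (Y * Yᴴ) p q = (1 : Matrix (Fin d × Fin d) (Fin d × Fin d) ℂ) p q := by rw [h1]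
  rw [Matrix.mul_apply, Matrix.one_apply] at h2
  rw [← h2]
  rw [show (∑ r, Y p r * Yᴴ r q) = ∑ r ∈ ({x, y} : Finset _), Y p r * Yᴴ r q from
    (Finset.sum_subset (Finset.subset_univ _) ?_).symm]
  · rw [Finset.sum_pair hxy]
    simp [Matrix.conjTranspose_apply]
  · intro r _ hr
    simp only [Finset.mem_insert, Finset.mem_singleton, not_or] at hr
    rw [hp r hr.1 hr.2, zero_mul]

/-- no perfect LDOI unitary matrices exist. -/
theorem stmt_12 {d : ℕ} (hd : 2 ≤ d) :
    ¬ ∃ A B C : Matrix (Fin d) (Fin d) ℂ,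
        EqDiag A B C ∧
        X3 A B C ∈ Matrix.unitaryGroup (Fin d × Fin d) ℂ ∧
        realign (X3 A B C) ∈ Matrix.unitaryGroup (Fin d × Fin d) ℂ ∧
        ptrans (X3 A B C) ∈ Matrix.unitaryGroup (Fin d × Fin d) ℂ := by
  rintro ⟨A, B, C, -, hX, hR, hP⟩
  obtain ⟨e, rfl⟩ : ∃ e, d = e + 2 := ⟨d - 2, by omega⟩
  set i : Fin (e + 2) := 0 with hi
  set j : Fin (e + 2) := 1 with hj
  have hij : i ≠ j := by simp [hi, hj]
  have hne : ((i, j) : Fin (e+2) × Fin (e+2)) ≠ (j, i) := by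
    simp [Prod.ext_iff, hij]
  -- equations from X
  have eX := dot_two _ hX (i, j) (i, j) (i, j) (j, i) hne
    (X3_row_zero A B C hij) (X3_row_zero A B C hij)
  have eX' := dot_two _ hX (j, i) (j, i) (i, j) (j, i) hne
    (fun r h1 h2 => X3_row_zero A B C hij.symm r h2 h1)
    (fun r h1 h2 => X3_row_zero A B C hij.symm r h2 h1)
  have eX'' := dot_two _ hX (i, j) (j, i) (i, j) (j, i) hne
    (X3_row_zero A B C hij)
    (fun r h1 h2 => X3_row_zero A B C hij.symm r h2 h1)
  rw [X3_v1 A B C hij, X3_v2 A B C hij, if_pos rfl] at eX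
  rw [X3_v1 A B C hij.symm, X3_v2 A B C hij.symm, if_pos rfl] at eX'
  rw [X3_v1 A B C hij, X3_v2 A B C hij, X3_v1 A B C hij.symm, X3_v2 A B C hij.symm,
    if_neg hne] at eX''
  -- equations from realign
  have eR := dot_two _ hR (i, j) (i, j) (i, j) (j, i) hne
    (realign_row_zero A B C hij) (realign_row_zero A B C hij)
  have eR' := dot_two _ hR (j, i) (j, i) (i, j) (j, i) hne
    (fun r h1 h2 => realign_row_zero A B C hij.symm r h2 h1)
    (fun r h1 h2 => realign_row_zero A B C hij.symm r h2 h1)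
  have eR'' := dot_two _ hR (i, j) (j, i) (i, j) (j, i) hne
    (realign_row_zero A B C hij)
    (fun r h1 h2 => realign_row_zero A B C hij.symm r h2 h1)
  rw [realign_v1 A B C hij, realign_v2 A B C hij, if_pos rfl] at eR
  rw [realign_v1 A B C hij.symm, realign_v2 A B C hij.symm, if_pos rfl] at eR'
  rw [realign_v1 A B C hij, realign_v2 A B C hij, realign_v1 A B C hij.symm,
    realign_v2 A B C hij.symm, if_neg hne] at eR''
  -- equations from ptrans
  have eP := dot_two _ hP (i, j) (i, j) (i, j) (j, i) hne
    (ptrans_row_zero A B C hij) (ptrans_row_zero A B C hij)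
  have eP' := dot_two _ hP (j, i) (j, i) (i, j) (j, i) hne
    (fun r h1 h2 => ptrans_row_zero A B C hij.symm r h2 h1)
    (fun r h1 h2 => ptrans_row_zero A B C hij.symm r h2 h1)
  have eP'' := dot_two _ hP (i, j) (j, i) (i, j) (j, i) hne
    (ptrans_row_zero A B C hij)
    (fun r h1 h2 => ptrans_row_zero A B C hij.symm r h2 h1)
  rw [ptrans_v1 A B C hij, ptrans_v2 A B C hij, if_pos rfl] at eP
  rw [ptrans_v1 A B C hij.symm, ptrans_v2 A B C hij.symm, if_pos rfl] at eP'
  rw [ptrans_v1 A B C hij, ptrans_v2 A B C hij, ptrans_v1 A B C hij.symm,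
    ptrans_v2 A B C hij.symm, if_neg hne] at eP''
  -- now pure algebra
  set a1 := A i j; set a2 := A j i
  set b1 := B i j; set b2 := B j i
  set c1 := C i j; set c2 := C j i
  -- eX : a1 ā1 + c1 c̄1 = 1 ; eX' : c2 c̄2 + a2 ā2 = 1 ; eX'' : a1 c̄2 + c1 ā2 = 0
  -- eR : b1 b̄1 + c1 c̄1 = 1 ; eR' : c2 c̄2 + b2 b̄2 = 1 ; eR'' : b1 c̄2 + c1 b̄2 = 0
  -- eP : a1 ā1 + b1 b̄1 = 1 ; eP' : b2 b̄2 + a2 ā2 = 1 ; eP'' : a1 b̄2 + b1 ā2 = 0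
  have ha2 : a2 * (starRingEnd ℂ) a2 = 1/2 := by linear_combination (eX' + eP' - eR') / 2
  have hb2 : b2 * (starRingEnd ℂ) b2 = 1/2 := by linear_combination (eR' + eP' - eX') / 2
  have hc2 : c2 * (starRingEnd ℂ) c2 = 1/2 := by linear_combination (eX' + eR' - eP') / 2
  have hb1 : b1 * (starRingEnd ℂ) b1 = 1/2 := by linear_combination (eR + eP - eX) / 2
  have hx : a1 * a2 + c1 * c2 = 0 := by
    linear_combination 2*a2*c2*eX'' - 2*a1*a2*hc2 - 2*c1*c2*ha2
  have hy : b1 * b2 + c1 * c2 = 0 := by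
    linear_combination 2*b2*c2*eR'' - 2*b1*b2*hc2 - 2*c1*c2*hb2
  have hz : a1 * a2 + b1 * b2 = 0 := by
    linear_combination 2*a2*b2*eP'' - 2*a1*a2*hb2 - 2*b1*b2*ha2
  have hbb : b1 * b2 = 0 := by linear_combination (hz + hy - hx) / 2
  have hfalse : (1 : ℂ)/4 = 0 := by
    linear_combination ((starRingEnd ℂ) b1 * (starRingEnd ℂ) b2) * hbb
      - (b2 * (starRingEnd ℂ) b2) * hb1 - (1/2) * hb2
  norm_num at hfalse
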